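/- Let V be a finite type with n = |V| ≥ 1 and let F be a nonempty superset-closed family of finsets of V. Then every vertex of the TAR graph of F has degree at most n, and the maximum degree of the TAR graph of F equals n if and only if every subset of V of cardinality n − 1 belongs to F. -/

import Mathlib

variable {V : Type*} [Fintype V] [DecidableEq V]

/-- A family of finsets is superset-closed if it is closed under taking supersets. -/
def SupersetClosed (F : Finset (Finset V)) : Prop :=
  ∀ ⦃S T : Finset V⦄, S ∈ F → S ⊆ T → T ∈ F

/-- A minimal member of a family: a member no proper subset of which is a member. -/
def IsMinimalMem (F : Finset (Finset V)) (M : Finset V) : Prop :=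
  M ∈ F ∧ ∀ M' : Finset V, M' ⊂ M → M' ∉ F

/-- The TAR graph of a family of finsets: vertices are the members of the family,
two members being adjacent iff their symmetric difference has exactly one element. -/
def TARGraph (F : Finset (Finset V)) : SimpleGraph {S : Finset V // S ∈ F} where
  Adj S T := (symmDiff S.1 T.1).card = 1
  symm := ⟨fun S T h => by change (symmDiff S.1 T.1).card = 1 at h; show (symmDiff T.1 S.1).card = 1; rwa [symmDiff_comm] at h⟩
  loopless := ⟨fun S h => by change (symmDiff S.1 S.1).card = 1 at h; simp [symmDiff_self] at h⟩

instance (F : Finset (Finset V)) : DecidableRel (TARGraph F).Adj :=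
  fun S T => inferInstanceAs (Decidable ((symmDiff S.1 T.1).card = 1))

/-!
A member `S` of `F` has one potential neighbour `S ∆ {v}` for each `v : V`, so its degree in the
TAR graph is the number of `v` with `S ∆ {v} ∈ F`, at most `|V|`. For a superset-closed family,
`S ∆ {v} ∈ F` for all `v` forces every coatom `{v}ᶜ` into `F` (it contains `S` or `S ∆ {v}`), and
conversely if all coatoms lie in `F` then so does `univ`, whose neighbours are exactly the coatoms.
-/

theorem SimpleGraph.maxDegree_eq_iff_exists_degree_eq {W : Type*} [Fintype W]
    (G : SimpleGraph W) [DecidableRel G.Adj] {k : ℕ} (hk : 0 < k) (h : ∀ w, G.degree w ≤ k) :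
    G.maxDegree = k ↔ ∃ w, G.degree w = k := by
  constructor
  · intro hmax
    cases isEmpty_or_nonempty W
    · rw [G.maxDegree_of_subsingleton] at hmax
      omega
    obtain ⟨w, hw⟩ := G.exists_maximal_degree_vertex
    exact ⟨w, hw ▸ hmax⟩
  · rintro ⟨w, hw⟩
    exact le_antisymm (G.maxDegree_le_of_forall_degree_le k h) (hw ▸ G.degree_le_maxDegree w)

theorem Finset.card_eq_fintype_card_sub_one_iff [Nonempty V] {S : Finset V} :
    S.card = Fintype.card V - 1 ↔ ∃ v, S = {v}ᶜ := by
  have hpos := Fintype.card_pos (α := V)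
  have hS := S.card_le_univ
  have hcompl := S.card_compl
  have hcoatom : (∃ v, S = {v}ᶜ) ↔ Sᶜ.card = 1 := by
    simp only [Finset.card_eq_one, eq_compl_comm (x := S), eq_comm]
  rw [hcoatom]
  omega

namespace TARGraph

variable {F : Finset (Finset V)}

theorem degree_eq_card_filter (S : {S : Finset V // S ∈ F}) :
    (TARGraph F).degree S = (Finset.univ.filter fun v => symmDiff S.1 {v} ∈ F).card := by
  rw [← SimpleGraph.card_neighborFinset_eq_degree, eq_comm]
  refine Finset.card_bij (fun v hv => ⟨symmDiff S.1 {v}, (Finset.mem_filter.1 hv).2⟩) ?_ ?_ ?_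
  · intro v _
    rw [SimpleGraph.mem_neighborFinset]
    change (symmDiff S.1 (symmDiff S.1 {v})).card = 1
    rw [symmDiff_symmDiff_cancel_left, Finset.card_singleton]
  · intro v _ w _ hvw
    exact Finset.singleton_injective (symmDiff_right_injective S.1 (congrArg Subtype.val hvw))
  · intro T hT
    obtain ⟨v, hv⟩ := Finset.card_eq_one.1 ((TARGraph F).mem_neighborFinset S T |>.1 hT)
    have hTv : T.1 = symmDiff S.1 {v} := by rw [← hv, symmDiff_symmDiff_cancel_left]
    exact ⟨v, Finset.mem_filter.2 ⟨Finset.mem_univ v, hTv ▸ T.2⟩, Subtype.ext hTv.symm⟩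

theorem degree_le_card (S : {S : Finset V // S ∈ F}) :
    (TARGraph F).degree S ≤ Fintype.card V := by
  rw [degree_eq_card_filter]
  exact Finset.card_filter_le _ _

theorem degree_eq_card_iff (S : {S : Finset V // S ∈ F}) :
    (TARGraph F).degree S = Fintype.card V ↔ ∀ v, symmDiff S.1 {v} ∈ F := by
  rw [degree_eq_card_filter, ← Finset.card_univ, Finset.card_filter_eq_iff]
  simp

end TARGraph

theorem SupersetClosed.exists_forall_symmDiff_singleton_mem_iff [Nonempty V]
    {F : Finset (Finset V)} (hF : SupersetClosed F) :
    (∃ S ∈ F, ∀ v, symmDiff S {v} ∈ F) ↔ ∀ v : V, {v}ᶜ ∈ F := by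
  constructor
  · rintro ⟨S, hS, hSv⟩ v
    by_cases hv : v ∈ S
    · refine hF (hSv v) ?_
      rw [symmDiff_of_ge (Finset.singleton_subset_iff.2 hv)]
      exact fun x hx => Finset.mem_compl.2 (Finset.mem_sdiff.1 hx).2
    · exact hF hS fun x hx => Finset.mem_compl.2 fun hxv => hv (Finset.mem_singleton.1 hxv ▸ hx)
  · intro h
    obtain ⟨v⟩ := ‹Nonempty V›
    refine ⟨Finset.univ, hF (h v) (Finset.subset_univ _), fun w => ?_⟩
    rw [← Finset.top_eq_univ, top_symmDiff]
    exact h w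

theorem stmt1_general (F : Finset (Finset V)) (hsup : SupersetClosed F)
    (hn : 1 ≤ Fintype.card V) :
    (∀ S : {S : Finset V // S ∈ F}, (TARGraph F).degree S ≤ Fintype.card V) ∧
    ((TARGraph F).maxDegree = Fintype.card V ↔
      ∀ S : Finset V, S.card = Fintype.card V - 1 → S ∈ F) := by
  have : Nonempty V := Fintype.card_pos_iff.1 hn
  refine ⟨TARGraph.degree_le_card, ?_⟩
  rw [SimpleGraph.maxDegree_eq_iff_exists_degree_eq _ hn TARGraph.degree_le_card]
  simp only [TARGraph.degree_eq_card_iff, Subtype.exists, exists_prop,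
    hsup.exists_forall_symmDiff_singleton_mem_iff, Finset.card_eq_fintype_card_sub_one_iff,
    forall_exists_index]
  rw [forall_comm]
  simp only [forall_eq]

theorem stmt1 (F : Finset (Finset V)) (hne : F.Nonempty) (hsup : SupersetClosed F)
    (hn : 1 ≤ Fintype.card V) :
    (∀ S : {S : Finset V // S ∈ F}, (TARGraph F).degree S ≤ Fintype.card V) ∧
    ((TARGraph F).maxDegree = Fintype.card V ↔
      ∀ S : Finset V, S.card = Fintype.card V - 1 → S ∈ F) :=
  stmt1_general F hsup hn
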